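/- arXiv:2004.01236 — 6 statements merged into one kernel-verified Lean document; each statement's English description precedes it below -/
import Mathlib

section
/- Let λ be a labeling of G_oct such that every face satisfies the strict triangle inequality (each of the three edge lengths of a face is strictly smaller than the sum of the other two). Call a map q : E_oct → ℝ³ a compatible spherical realization if ‖q(e)‖ = 1 for all e ∈ E_oct and, for every face {i,j,m} and every two of its edges e = {i,j} and f = {m,j} with common vertex j, one has ℓ_{ij} · ℓ_{mj} · ⟪q(e), q(f)⟫ = (λ{i,j}² + λ{m,j}² − λ{i,m}²)/2. Then: (a) for every realization ρ compatible with λ, the map q_ρ defined by q_ρ({i,j}) = (ρ(i) − ρ(j))/λ({i,j}) for each directed edge (i,j) of the fixed orientation is a compatible spherical realization; (b) the assignment ρ ↦ q_ρ induces a bijection between the set of realizations compatible with λ modulo translations of ℝ³ and the set of compatible spherical realizations. -/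
/-!
Write `v i j := ℓ_{ij} • q{i,j}`, the candidate for `ρ i - ρ j`. For a realization `ρ` the
spherical conditions are the law of cosines for the faces. Conversely, on each face the three
conditions fix the pairwise inner products of `v i j`, `v j m`, `v m i` to exactly those of a
closed triangle, which forces `‖v i j + v j m + v m i‖ = 0`. Since the faces generate the cycle
space of the octahedron, `v` then integrates to a realization `ρ`, unique up to translation
because the octahedron is connected.
-/

open EuclideanGeometry

noncomputable section

/-- Points of Euclidean 3-space. -/
abbrev Pt : Type := EuclideanSpace ℝ (Fin 3)

/-- The vertex set of the octahedral graph. -/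
def octV : Finset ℕ := {1, 2, 3, 4, 5, 6}

/-- `{i, j}` is an edge of the octahedral graph `G_oct`. -/
def IsOctEdge (i j : ℕ) : Prop :=
  i ∈ octV ∧ j ∈ octV ∧ i ≠ j ∧
    ({i, j} : Finset ℕ) ≠ {1, 2} ∧ ({i, j} : Finset ℕ) ≠ {3, 4} ∧ ({i, j} : Finset ℕ) ≠ {5, 6}

/-- `{i, j, k}` is a face of the octahedron. -/
def IsOctFace (i j k : ℕ) : Prop :=
  ({i, j, k} : Finset ℕ) ∈
    ({ {1,3,5}, {1,3,6}, {1,4,5}, {1,4,6}, {2,3,5}, {2,3,6}, {2,4,5}, {2,4,6} } :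
      Finset (Finset ℕ))

/-- A realization `ρ` is compatible with the labeling `lam`. -/
def Compatible (lam : Sym2 ℕ → ℝ) (ρ : ℕ → Pt) : Prop :=
  ∀ i j, IsOctEdge i j → dist (ρ i) (ρ j) = lam s(i, j)

/-- The fixed orientation of the edges of `G_oct`. -/
def dOrient : List (ℕ × ℕ) :=
  [(1,6), (1,3), (4,1), (5,1), (6,3), (4,6), (6,2), (3,5), (3,2), (5,4), (2,4), (2,5)]

/-- The signed length `ℓ_{ij}`: it equals `λ{i,j}` if `(i,j)` belongs to the fixed
orientation and `-λ{i,j}` otherwise. -/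
def sgnLen (lam : Sym2 ℕ → ℝ) (i j : ℕ) : ℝ :=
  if (i, j) ∈ dOrient then lam s(i, j) else - lam s(i, j)

/-- The edges of `G_oct`, i.e. the set `E_oct`, as a subtype of `Sym2 ℕ`. -/
abbrev OctE : Type := {e : Sym2 ℕ // ∃ i j, IsOctEdge i j ∧ e = s(i, j)}

/-- `q : E_oct → ℝ³` is a compatible spherical realization for the labeling `lam`:
all points are on the unit sphere and for every face `{i,j,m}` and every two of its
edges `{i,j}` and `{m,j}` with common vertex `j` one has
`ℓ_{ij} ⬝ ℓ_{mj} ⬝ ⟪q{i,j}, q{m,j}⟫ = (λ{i,j}² + λ{m,j}² − λ{i,m}²)/2`. -/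
def SphCompatible (lam : Sym2 ℕ → ℝ) (q : OctE → Pt) : Prop :=
  (∀ e : OctE, ‖q e‖ = 1) ∧
  ∀ (e f : OctE) (i j m : ℕ), IsOctFace i j m →
    (e : Sym2 ℕ) = s(i, j) → (f : Sym2 ℕ) = s(m, j) →
    sgnLen lam i j * sgnLen lam m j * (inner ℝ (q e) (q f) : ℝ) =
      (lam s(i, j) ^ 2 + lam s(m, j) ^ 2 - lam s(i, m) ^ 2) / 2

/-- `q` agrees with the spherical realization `q_ρ` induced by the realization `ρ`:
for every directed edge `(i, j)` of the fixed orientation,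
`q {i,j} = (ρ i − ρ j) / λ{i,j}`. -/
def InducedSph (lam : Sym2 ℕ → ℝ) (ρ : ℕ → Pt) (q : OctE → Pt) : Prop :=
  ∀ (e : OctE) (p : ℕ × ℕ), p ∈ dOrient → (e : Sym2 ℕ) = s(p.1, p.2) →
    q e = (lam s(p.1, p.2))⁻¹ • (ρ p.1 - ρ p.2)

open scoped RealInnerProductSpace

theorem add_add_eq_zero_of_two_inner {E : Type*} [NormedAddCommGroup E] [InnerProductSpace ℝ E]
    {a b c : E} (hab : 2 * ⟪a, b⟫ = ‖c‖ ^ 2 - ‖a‖ ^ 2 - ‖b‖ ^ 2)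
    (hbc : 2 * ⟪b, c⟫ = ‖a‖ ^ 2 - ‖b‖ ^ 2 - ‖c‖ ^ 2)
    (hca : 2 * ⟪c, a⟫ = ‖b‖ ^ 2 - ‖c‖ ^ 2 - ‖a‖ ^ 2) : a + b + c = 0 := by
  have h : ‖a + b + c‖ ^ 2 = 0 := by
    rw [norm_add_sq_real, norm_add_sq_real, inner_add_left, real_inner_comm c a]
    linarith
  simpa using h

instance (i j : ℕ) : Decidable (IsOctEdge i j) := by unfold IsOctEdge; infer_instance

instance (i j m : ℕ) : Decidable (IsOctFace i j m) := by unfold IsOctFace; infer_instance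

theorem IsOctEdge.symm {i j : ℕ} (h : IsOctEdge i j) : IsOctEdge j i := by
  obtain ⟨hi, hj, hij, h12, h34, h56⟩ := h
  refine ⟨hj, hi, hij.symm, ?_, ?_, ?_⟩ <;> rwa [Finset.pair_comm]

theorem IsOctFace.rotate {i j m : ℕ} (h : IsOctFace i j m) : IsOctFace j m i := by
  have hperm : ({j, m, i} : Finset ℕ) = {i, j, m} := by
    ext; simp only [Finset.mem_insert, Finset.mem_singleton]; tauto
  unfold IsOctFace at *
  rwa [hperm]

theorem IsOctFace.mem_octV {i j m : ℕ} (h : IsOctFace i j m) : i ∈ octV :=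
  (by decide : ∀ S ∈ _, S ⊆ octV) _ h (by simp)

theorem IsOctFace.isOctEdge {i j m : ℕ} (h : IsOctFace i j m) : IsOctEdge i j := by
  have key : ∀ i ∈ octV, ∀ j ∈ octV, ∀ m ∈ octV, IsOctFace i j m → IsOctEdge i j := by decide
  exact key i h.mem_octV j h.rotate.mem_octV m h.rotate.rotate.mem_octV h

theorem isOctEdge_of_mem_dOrient : ∀ p ∈ dOrient, IsOctEdge p.1 p.2 := by decide

theorem mem_dOrient_iff_not_mem_swap {i j : ℕ} (h : IsOctEdge i j) :
    (i, j) ∈ dOrient ↔ (j, i) ∉ dOrient := by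
  have key : ∀ i ∈ octV, ∀ j ∈ octV, IsOctEdge i j → ((i, j) ∈ dOrient ↔ (j, i) ∉ dOrient) := by
    decide
  exact key i h.1 j h.2.1 h

theorem forall_isOctEdge_iff_forall_mem_dOrient {P : ℕ → ℕ → Prop}
    (hP : ∀ i j, P i j → P j i) :
    (∀ i j, IsOctEdge i j → P i j) ↔ ∀ p ∈ dOrient, P p.1 p.2 := by
  refine ⟨fun h p hp => h _ _ (isOctEdge_of_mem_dOrient p hp), fun h i j hij => ?_⟩
  by_cases hmem : (i, j) ∈ dOrient
  · exact h _ hmem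
  · exact hP _ _ (h (j, i) (by simpa [mem_dOrient_iff_not_mem_swap hij] using hmem))

theorem eq_of_forall_mem_dOrient {α : Type*} (f : ℕ → α) (h : ∀ p ∈ dOrient, f p.1 = f p.2) :
    ∀ i ∈ octV, f i = f 1 := by
  simp only [dOrient, List.mem_cons, List.not_mem_nil, or_false, forall_eq_or_imp] at h
  simp only [octV, Finset.mem_insert, Finset.mem_singleton]
  grind

theorem forall_sub_eq_sub_iff_exists_eq_add {G : Type*} [AddCommGroup G] (f g : ℕ → G) :
    (∀ p ∈ dOrient, f p.1 - f p.2 = g p.1 - g p.2) ↔ ∃ t, ∀ i ∈ octV, g i = f i + t := by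
  constructor
  · intro h
    refine ⟨g 1 - f 1, fun i hi => ?_⟩
    have hconst := eq_of_forall_mem_dOrient (f - g)
      (fun p hp => sub_eq_sub_iff_sub_eq_sub.1 (h p hp)) i hi
    simp only [Pi.sub_apply] at hconst
    grind
  · rintro ⟨t, ht⟩ p hp
    have hp' := isOctEdge_of_mem_dOrient p hp
    rw [ht _ hp'.1, ht _ hp'.2.1, add_sub_add_right_eq_sub]

theorem exists_eq_sub_of_isOctFace {G : Type*} [AddCommGroup G] (v : ℕ → ℕ → G)
    (hswap : ∀ i j, v j i = -v i j)
    (hface : ∀ i j m, IsOctFace i j m → v i j + v j m + v m i = 0) :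
    ∃ ρ : ℕ → G, ∀ p ∈ dOrient, v p.1 p.2 = ρ p.1 - ρ p.2 := by
  -- integrate `v` along the star of vertex `1`, and reach vertex `2` through `5`
  refine ⟨fun n => if n = 1 then 0 else if n = 2 then v 2 5 + v 5 1 else v n 1, ?_⟩
  have := hface 1 3 5 (by decide)
  have := hface 1 3 6 (by decide)
  have := hface 1 4 5 (by decide)
  have := hface 1 4 6 (by decide)
  have := hface 2 3 5 (by decide)
  have := hface 2 3 6 (by decide)
  have := hface 2 4 5 (by decide)
  simp only [dOrient, List.mem_cons, List.not_mem_nil, or_false]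
  rintro p (rfl | rfl | rfl | rfl | rfl | rfl | rfl | rfl | rfl | rfl | rfl | rfl) <;> grind

section SignedLength

variable (lam : Sym2 ℕ → ℝ)

theorem sgnLen_of_mem_dOrient {i j : ℕ} (h : (i, j) ∈ dOrient) : sgnLen lam i j = lam s(i, j) :=
  if_pos h

theorem sgnLen_swap {i j : ℕ} (h : IsOctEdge i j) : sgnLen lam j i = -sgnLen lam i j := by
  simp only [sgnLen, mem_dOrient_iff_not_mem_swap h, Sym2.eq_swap (a := j)]
  split_ifs <;> simp

theorem abs_sgnLen (i j : ℕ) : |sgnLen lam i j| = |lam s(i, j)| := by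
  unfold sgnLen; split_ifs <;> simp

end SignedLength

/-- `ℓ_{ij} • q{i,j}`, extended by `0` to non-edges. -/
def edgeVec (lam : Sym2 ℕ → ℝ) (q : OctE → Pt) (i j : ℕ) : Pt :=
  if h : IsOctEdge i j then sgnLen lam i j • q ⟨s(i, j), i, j, h, rfl⟩ else 0

section EdgeVec

variable {lam : Sym2 ℕ → ℝ} {q : OctE → Pt}

theorem edgeVec_eq {i j : ℕ} (h : IsOctEdge i j) {e : OctE} (he : (e : Sym2 ℕ) = s(i, j)) :
    edgeVec lam q i j = sgnLen lam i j • q e := by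
  rw [edgeVec, dif_pos h, show e = ⟨s(i, j), i, j, h, rfl⟩ from Subtype.ext he]

theorem edgeVec_swap (i j : ℕ) : edgeVec lam q j i = -edgeVec lam q i j := by
  by_cases h : IsOctEdge i j
  · set e : OctE := ⟨s(i, j), i, j, h, rfl⟩
    rw [edgeVec_eq h (e := e) rfl, edgeVec_eq h.symm (e := e) Sym2.eq_swap, sgnLen_swap lam h,
      neg_smul]
  · have h' : ¬IsOctEdge j i := fun h' => h h'.symm
    simp [edgeVec, h, h']

theorem norm_edgeVec (hpos : ∀ i j, IsOctEdge i j → 0 < lam s(i, j)) {i j : ℕ}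
    (h : IsOctEdge i j) {e : OctE} (he : (e : Sym2 ℕ) = s(i, j)) :
    ‖edgeVec lam q i j‖ = lam s(i, j) * ‖q e‖ := by
  rw [edgeVec_eq h he, norm_smul, Real.norm_eq_abs, abs_sgnLen, abs_of_pos (hpos i j h)]

theorem inner_edgeVec {i j m : ℕ} (hij : IsOctEdge i j) (hmj : IsOctEdge m j) {e f : OctE}
    (he : (e : Sym2 ℕ) = s(i, j)) (hf : (f : Sym2 ℕ) = s(m, j)) :
    ⟪edgeVec lam q i j, edgeVec lam q m j⟫ = sgnLen lam i j * sgnLen lam m j * ⟪q e, q f⟫ := by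
  rw [edgeVec_eq hij he, edgeVec_eq hmj hf, real_inner_smul_left, real_inner_smul_right, mul_assoc]

theorem inducedSph_iff (hpos : ∀ i j, IsOctEdge i j → 0 < lam s(i, j)) {ρ : ℕ → Pt} :
    InducedSph lam ρ q ↔ ∀ p ∈ dOrient, edgeVec lam q p.1 p.2 = ρ p.1 - ρ p.2 := by
  constructor
  · intro h p hp
    have hp' := isOctEdge_of_mem_dOrient p hp
    rw [edgeVec_eq hp' (e := ⟨s(p.1, p.2), _, _, hp', rfl⟩) rfl, h _ p hp rfl,
      sgnLen_of_mem_dOrient lam (i := p.1) (j := p.2) hp, smul_inv_smul₀ (hpos _ _ hp').ne']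
  · intro h e p hp he
    rw [← h p hp, edgeVec_eq (isOctEdge_of_mem_dOrient p hp) he,
      sgnLen_of_mem_dOrient lam (i := p.1) (j := p.2) hp,
      inv_smul_smul₀ (hpos _ _ (isOctEdge_of_mem_dOrient p hp)).ne']

theorem InducedSph.edgeVec_eq_sub {ρ : ℕ → Pt} (h : InducedSph lam ρ q)
    (hpos : ∀ i j, IsOctEdge i j → 0 < lam s(i, j)) :
    ∀ i j, IsOctEdge i j → edgeVec lam q i j = ρ i - ρ j :=
  (forall_isOctEdge_iff_forall_mem_dOrient fun i j h => by rw [edgeVec_swap, h, neg_sub]).2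
    ((inducedSph_iff hpos).1 h)

theorem InducedSph.compatible {ρ : ℕ → Pt} (h : InducedSph lam ρ q)
    (hpos : ∀ i j, IsOctEdge i j → 0 < lam s(i, j)) (hq : ∀ e, ‖q e‖ = 1) :
    Compatible lam ρ := by
  intro i j hij
  rw [dist_eq_norm, ← h.edgeVec_eq_sub hpos i j hij,
    norm_edgeVec hpos hij (e := ⟨_, i, j, hij, rfl⟩) rfl, hq, mul_one]

theorem InducedSph.sphCompatible {ρ : ℕ → Pt} (h : InducedSph lam ρ q)
    (hpos : ∀ i j, IsOctEdge i j → 0 < lam s(i, j)) (hρ : Compatible lam ρ) :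
    SphCompatible lam q := by
  have hsub := h.edgeVec_eq_sub hpos
  constructor
  · intro e
    obtain ⟨i, j, hij, he⟩ := e.2
    have hnorm := norm_edgeVec (q := q) hpos hij he
    rw [hsub i j hij, ← dist_eq_norm, hρ i j hij] at hnorm
    exact (mul_eq_left₀ (hpos i j hij).ne').1 hnorm.symm
  · intro e f i j m hface he hf
    have hij := hface.isOctEdge
    have hmj := hface.rotate.isOctEdge.symm
    rw [← inner_edgeVec hij hmj he hf, hsub i j hij, hsub m j hmj,
      real_inner_eq_norm_mul_self_add_norm_mul_self_sub_norm_sub_mul_self_div_two,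
      sub_sub_sub_cancel_right, ← dist_eq_norm, ← dist_eq_norm, ← dist_eq_norm, hρ i j hij,
      hρ m j hmj, hρ i m hface.rotate.rotate.isOctEdge.symm]
    ring

theorem SphCompatible.two_inner_edgeVec (hq : SphCompatible lam q)
    (hpos : ∀ i j, IsOctEdge i j → 0 < lam s(i, j)) {i j m : ℕ}
    (h : IsOctFace i j m) :
    2 * ⟪edgeVec lam q i j, edgeVec lam q j m⟫ =
      ‖edgeVec lam q m i‖ ^ 2 - ‖edgeVec lam q i j‖ ^ 2 - ‖edgeVec lam q j m‖ ^ 2 := by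
  have hij := h.isOctEdge
  have hmj := h.rotate.isOctEdge.symm
  have hmi := h.rotate.rotate.isOctEdge
  let e : OctE := ⟨_, i, j, hij, rfl⟩
  let f : OctE := ⟨_, m, j, hmj, rfl⟩
  let g : OctE := ⟨_, m, i, hmi, rfl⟩
  have hcos := hq.2 e f i j m h rfl rfl
  rw [← inner_edgeVec hij hmj rfl rfl] at hcos
  rw [edgeVec_swap m j, inner_neg_right, norm_neg, norm_edgeVec (e := e) hpos hij rfl,
    norm_edgeVec (e := f) hpos hmj rfl, norm_edgeVec (e := g) hpos hmi rfl, hq.1, hq.1, hq.1,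
    hcos, Sym2.eq_swap (a := m) (b := i)]
  ring

theorem SphCompatible.edgeVec_add_add (hq : SphCompatible lam q)
    (hpos : ∀ i j, IsOctEdge i j → 0 < lam s(i, j)) {i j m : ℕ}
    (h : IsOctFace i j m) : edgeVec lam q i j + edgeVec lam q j m + edgeVec lam q m i = 0 :=
  add_add_eq_zero_of_two_inner (hq.two_inner_edgeVec hpos h)
    (hq.two_inner_edgeVec hpos h.rotate) (hq.two_inner_edgeVec hpos h.rotate.rotate)

end EdgeVec

theorem space_to_sphere_general
    (lam : Sym2 ℕ → ℝ)
    (hpos : ∀ i j, IsOctEdge i j → 0 < lam s(i, j)) :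
    -- (a)
    (∀ ρ : ℕ → Pt, Compatible lam ρ →
      ∀ q : OctE → Pt, InducedSph lam ρ q → SphCompatible lam q) ∧
    -- (b) surjectivity
    (∀ q : OctE → Pt, SphCompatible lam q →
      ∃ ρ : ℕ → Pt, Compatible lam ρ ∧ InducedSph lam ρ q) ∧
    -- (b) injectivity modulo translations
    (∀ ρ₁ ρ₂ : ℕ → Pt, Compatible lam ρ₁ → Compatible lam ρ₂ →
      ((∀ p ∈ dOrient,
          (lam s(p.1, p.2))⁻¹ • (ρ₁ p.1 - ρ₁ p.2) = (lam s(p.1, p.2))⁻¹ • (ρ₂ p.1 - ρ₂ p.2)) ↔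
        ∃ t : Pt, ∀ i ∈ octV, ρ₂ i = ρ₁ i + t)) := by
  refine ⟨fun ρ hρ q hq => hq.sphCompatible hpos hρ, fun q hq => ?_, fun ρ₁ ρ₂ _ _ => ?_⟩
  · obtain ⟨ρ, hρ⟩ := exists_eq_sub_of_isOctFace (edgeVec lam q) edgeVec_swap
      fun _ _ _ h => hq.edgeVec_add_add hpos h
    have hind : InducedSph lam ρ q := (inducedSph_iff hpos).2 hρ
    exact ⟨ρ, hind.compatible hpos hq.1, hind⟩
  · rw [← forall_sub_eq_sub_iff_exists_eq_add]
    exact forall₂_congr fun p hp =>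
      smul_right_inj (inv_ne_zero (hpos _ _ (isOctEdge_of_mem_dOrient p hp)).ne')

/-- Reduction from space to sphere: (a) the spherical realization induced by a compatible
realization is a compatible spherical realization; (b) `ρ ↦ q_ρ` induces a bijection
between compatible realizations modulo translations and compatible spherical
realizations. -/
theorem space_to_sphere
    (lam : Sym2 ℕ → ℝ)
    (hpos : ∀ i j, IsOctEdge i j → 0 < lam s(i, j))
    (htri : ∀ i j m, IsOctFace i j m → lam s(i, m) < lam s(i, j) + lam s(j, m)) :
    -- (a)
    (∀ ρ : ℕ → Pt, Compatible lam ρ →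
      ∀ q : OctE → Pt, InducedSph lam ρ q → SphCompatible lam q) ∧
    -- (b) surjectivity
    (∀ q : OctE → Pt, SphCompatible lam q →
      ∃ ρ : ℕ → Pt, Compatible lam ρ ∧ InducedSph lam ρ q) ∧
    -- (b) injectivity modulo translations
    (∀ ρ₁ ρ₂ : ℕ → Pt, Compatible lam ρ₁ → Compatible lam ρ₂ →
      ((∀ p ∈ dOrient,
          (lam s(p.1, p.2))⁻¹ • (ρ₁ p.1 - ρ₁ p.2) = (lam s(p.1, p.2))⁻¹ • (ρ₂ p.1 - ρ₂ p.2)) ↔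
        ∃ t : Pt, ∀ i ∈ octV, ρ₂ i = ρ₁ i + t)) :=
  space_to_sphere_general lam hpos
end
end

section
/- Let p1, p2, p3, p4 be pairwise distinct points of ℝ³ that are not all collinear, and let η1, η2, η3, η4 ∈ {1, −1}. If η1·dist(p1,p2) + η2·dist(p2,p3) + η3·dist(p3,p4) + η4·dist(p4,p1) = 0, then exactly two of η1, η2, η3, η4 equal 1 (and the other two equal −1). -/
/-!
Each side of a quadrilateral is at most the sum of the other three, and in a strictly convex
space equality forces every vertex onto the line through the endpoints of that side. So for
non-collinear vertices each side is strictly shorter than the other three together. Then no sign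
pattern in which three or four signs agree can make the signed sum vanish, so the signs sum to
`0`: two of them are `1` and two are `-1`.
-/

noncomputable section

open Finset

theorem collinear_rotate_four {k V P : Type*} [DivisionRing k] [AddCommGroup V] [Module k V]
    [AddTorsor V P] {p q r s : P} :
    Collinear k ({q, r, s, p} : Set P) ↔ Collinear k ({p, q, r, s} : Set P) := by
  rw [Set.insert_comm p q, Set.insert_comm p r, Set.pair_comm p s]

section StrictConvex

variable {V P : Type*} [NormedAddCommGroup V] [NormedSpace ℝ V] [StrictConvexSpace ℝ V]
  [MetricSpace P] [NormedAddTorsor V P]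

theorem collinear_of_dist_add_dist_add_dist_eq {p q r s : P}
    (h : dist p q + dist q r + dist r s = dist p s) : Collinear ℝ ({p, q, r, s} : Set P) := by
  have hq : Wbtw ℝ p q s := dist_add_dist_eq_iff.1 <| le_antisymm
    (by linarith [dist_triangle q r s]) (dist_triangle p q s)
  have hr : Wbtw ℝ p r s := dist_add_dist_eq_iff.1 <| le_antisymm
    (by linarith [dist_triangle p q r]) (dist_triangle p r s)
  rw [Set.insert_comm p q, Set.insert_comm p r]
  exact collinear_insert_insert_of_mem_affineSpan_pair hq.mem_affineSpan hr.mem_affineSpan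

theorem dist_lt_dist_add_dist_add_dist_of_not_collinear {p q r s : P}
    (h : ¬ Collinear ℝ ({p, q, r, s} : Set P)) :
    dist s p < dist p q + dist q r + dist r s := by
  rw [dist_comm]
  exact (dist_triangle4 p q r s).lt_of_ne fun heq =>
    h (collinear_of_dist_add_dist_add_dist_eq heq.symm)

end StrictConvex

theorem sum_eq_zero_of_signed_quadrilateral {η : Fin 4 → ℝ} {a b c d : ℝ}
    (hη : ∀ i, η i = 1 ∨ η i = -1) (ha : a < b + c + d) (hb : b < c + d + a)
    (hc : c < d + a + b) (hd : d < a + b + c)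
    (h : η 0 * a + η 1 * b + η 2 * c + η 3 * d = 0) : ∑ i, η i = 0 := by
  rw [Fin.sum_univ_four]
  rcases hη 0 with h0 | h0 <;> rcases hη 1 with h1 | h1 <;> rcases hη 2 with h2 | h2 <;>
    rcases hη 3 with h3 | h3 <;> rw [h0, h1, h2, h3] at h ⊢ <;> linarith

theorem two_mul_card_filter_eq_card_of_sum_eq_zero {ι : Type*} [Fintype ι] {η : ι → ℝ}
    (hη : ∀ i, η i = 1 ∨ η i = -1) (hsum : ∑ i, η i = 0) :
    2 * (univ.filter fun i => η i = 1).card = Fintype.card ι ∧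
      2 * (univ.filter fun i => η i = -1).card = Fintype.card ι := by
  have hneg : (univ.filter fun i => ¬ η i = 1) = univ.filter fun i => η i = -1 :=
    filter_congr fun i _ => by rcases hη i with h | h <;> norm_num [h]
  have hcard := card_filter_add_card_filter_not (s := univ) fun i => η i = 1
  rw [hneg, card_univ] at hcard
  have hdiff : ((univ.filter fun i => η i = 1).card : ℝ) -
      (univ.filter fun i => η i = -1).card = 0 := by
    rw [← hsum, ← sum_filter_add_sum_filter_not univ fun i => η i = 1, hneg,
      sum_congr rfl fun i hi => (mem_filter.1 hi).2, sum_congr rfl fun i hi => (mem_filter.1 hi).2]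
    simp [sub_eq_add_neg]
  have hbalance : (univ.filter fun i => η i = 1).card = (univ.filter fun i => η i = -1).card := by
    exact_mod_cast sub_eq_zero.1 hdiff
  omega

theorem signed_quadrilateral_relation_general
    (p₁ p₂ p₃ p₄ : Pt)
    (hncol : ¬ Collinear ℝ ({p₁, p₂, p₃, p₄} : Set Pt))
    (η : Fin 4 → ℝ)
    (hη : ∀ i, η i = 1 ∨ η i = -1)
    (heq : η 0 * dist p₁ p₂ + η 1 * dist p₂ p₃ + η 2 * dist p₃ p₄ + η 3 * dist p₄ p₁ = 0) :
    (Finset.univ.filter fun i => η i = 1).card = 2 ∧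
      (Finset.univ.filter fun i => η i = -1).card = 2 := by
  have hncol₂ : ¬ Collinear ℝ ({p₂, p₃, p₄, p₁} : Set Pt) := collinear_rotate_four.not.2 hncol
  have hncol₃ : ¬ Collinear ℝ ({p₃, p₄, p₁, p₂} : Set Pt) := collinear_rotate_four.not.2 hncol₂
  have hncol₄ : ¬ Collinear ℝ ({p₄, p₁, p₂, p₃} : Set Pt) := collinear_rotate_four.not.2 hncol₃
  have hsum : ∑ i, η i = 0 := sum_eq_zero_of_signed_quadrilateral hη
    (dist_lt_dist_add_dist_add_dist_of_not_collinear hncol₂)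
    (dist_lt_dist_add_dist_add_dist_of_not_collinear hncol₃)
    (dist_lt_dist_add_dist_add_dist_of_not_collinear hncol₄)
    (dist_lt_dist_add_dist_add_dist_of_not_collinear hncol) heq
  have hcard := two_mul_card_filter_eq_card_of_sum_eq_zero hη hsum
  rw [Fintype.card_fin] at hcard
  omega

/-- If four pairwise distinct, not all collinear points of `ℝ³` satisfy a vanishing
signed sum of consecutive distances with signs `±1`, then exactly two of the four
signs equal `1` (and hence the other two equal `-1`). -/
theorem signed_quadrilateral_relation
    (p₁ p₂ p₃ p₄ : Pt)
    (hdist : p₁ ≠ p₂ ∧ p₁ ≠ p₃ ∧ p₁ ≠ p₄ ∧ p₂ ≠ p₃ ∧ p₂ ≠ p₄ ∧ p₃ ≠ p₄)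
    (hncol : ¬ Collinear ℝ ({p₁, p₂, p₃, p₄} : Set Pt))
    (η : Fin 4 → ℝ)
    (hη : ∀ i, η i = 1 ∨ η i = -1)
    (heq : η 0 * dist p₁ p₂ + η 1 * dist p₂ p₃ + η 2 * dist p₃ p₄ + η 3 * dist p₄ p₁ = 0) :
    (Finset.univ.filter fun i => η i = 1).card = 2 ∧
      (Finset.univ.filter fun i => η i = -1).card = 2 :=
  signed_quadrilateral_relation_general p₁ p₂ p₃ p₄ hncol η hη heq
end
end

section
/- Let v, w1, w2, w3, w4 ∈ ℝ³ be such that for each i (indices mod 4) the three points v, w_i, w_{i+1} are not collinear, and let α_i = ∠ w_i v w_{i+1}. Assume the rhomboid condition: either (α1 = α3 and α2 = α4) or (α1 + α3 = π and α2 + α4 = π), and additionally cos²α1 ≠ cos²α2 (excluding lozenges). If for some index i the four points v, w_{i−1}, w_i, w_{i+1} are coplanar (equivalently, the dihedral angle between the two triangular faces meeting along the segment v w_i is 0 or π), then all five points v, w1, w2, w3, w4 are coplanar. Conversely, if the five points are coplanar, then for every index i the four points v, w_{i−1}, w_i, w_{i+1} are coplanar. -/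
/-!
Put `x j = w j - v`. For nonzero vectors the Gram determinant of `x, y, z` is
`(‖x‖ ‖y‖ ‖z‖)²` times `1 + 2abc - a² - b² - c²`, where `a, b, c` are the cosines of the
mutual angles, so coplanarity of three directions is an algebraic condition on cosines.
The rhomboid condition says `cos α (j + 2) = σ cos α j` for a fixed sign `σ`, and this makes the
expression equal for the triples `(x (i-1), x i, x (i+1))` and `(x (i-1), x (i+1), x (i+2))`.
If it vanishes for the first triple, then `x (i-1), x (i+1)` cannot be parallel (that would force
`cos² α (i-1) = cos² α i`), so both `x i` and `x (i+2)` lie in the plane of `x (i-1), x (i+1)`.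
-/

open EuclideanGeometry

noncomputable section

open Real InnerProductGeometry Matrix Submodule

/-- The Gram determinant of three unit vectors whose pairwise inner products are `a, b, c`. -/
def gramCos (a b c : ℝ) : ℝ := 1 + 2 * a * b * c - a ^ 2 - b ^ 2 - c ^ 2

theorem gramCos_ne_zero_of_sq_eq_one {a b t : ℝ} (hab : a ^ 2 ≠ b ^ 2) (ht : t ^ 2 = 1) :
    gramCos a b t ≠ 0 := by
  intro h
  have hb : a * t = b := by
    have : (a * t - b) ^ 2 = 0 := by
      unfold gramCos at h
      linear_combination (a ^ 2 - 1) * ht - h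
    linear_combination pow_eq_zero_iff two_ne_zero |>.1 this
  exact hab (by rw [← hb, mul_pow, ht, mul_one])

theorem ZMod.four_cases (j : ZMod 4) : j = 0 ∨ j = 1 ∨ j = 2 ∨ j = 3 := by
  revert j; decide

theorem ZMod.four_cases_rel (i j : ZMod 4) : j = i - 1 ∨ j = i ∨ j = i + 1 ∨ j = i + 2 := by
  revert i j; decide

theorem ZMod.four_ne_add_one_of_add_two_eq {β : Type*} {f : ZMod 4 → β}
    (h2 : ∀ j, f (j + 2) = f j) (h01 : f 0 ≠ f 1) (j : ZMod 4) : f j ≠ f (j + 1) := by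
  have h20 : f 2 = f 0 := h2 0
  have h31 : f 3 = f 1 := h2 1
  obtain rfl | rfl | rfl | rfl := ZMod.four_cases j <;> reduce_mod_char
  · exact h01
  · rw [h20]; exact h01.symm
  · rw [h20, h31]; exact h01
  · rw [h31]; exact h01.symm

theorem exists_sign_cos_add_two {α : ZMod 4 → ℝ}
    (h : (α 0 = α 2 ∧ α 1 = α 3) ∨ (α 0 + α 2 = π ∧ α 1 + α 3 = π)) :
    ∃ σ : ℝ, σ ^ 2 = 1 ∧ ∀ j, cos (α (j + 2)) = σ * cos (α j) := by
  rcases h with ⟨h02, h13⟩ | ⟨h02, h13⟩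
  · refine ⟨1, one_pow 2, fun j => ?_⟩
    obtain rfl | rfl | rfl | rfl := ZMod.four_cases j <;> reduce_mod_char <;> simp [h02, h13]
  · refine ⟨-1, by norm_num, fun j => ?_⟩
    have h20 : α 2 = π - α 0 := by linarith
    have h31 : α 3 = π - α 1 := by linarith
    obtain rfl | rfl | rfl | rfl := ZMod.four_cases j <;> reduce_mod_char <;> simp [h20, h31]

section InnerProductSpace

variable {E : Type*} [NormedAddCommGroup E] [InnerProductSpace ℝ E]

theorem det_gram_fin_two (x y : E) :
    (gram ℝ ![x, y]).det = (‖x‖ * ‖y‖) ^ 2 * (1 - cos (angle x y) ^ 2) := by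
  simp only [det_fin_two, gram_apply, cons_val_zero, cons_val_one, real_inner_self_eq_norm_sq,
    ← cos_angle_mul_norm_mul_norm, InnerProductGeometry.angle_comm y x]
  ring

theorem det_gram_fin_three (x y z : E) :
    (gram ℝ ![x, y, z]).det =
      (‖x‖ * ‖y‖ * ‖z‖) ^ 2 * gramCos (cos (angle x y)) (cos (angle y z)) (cos (angle x z)) := by
  simp only [det_fin_three, gram_apply, cons_val_zero, cons_val_one, cons_val,
    real_inner_self_eq_norm_sq, ← cos_angle_mul_norm_mul_norm,
    InnerProductGeometry.angle_comm y x, InnerProductGeometry.angle_comm z x,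
    InnerProductGeometry.angle_comm z y, gramCos]
  ring

theorem linearIndependent_pair_iff_cos_sq_ne_one {x y : E} (hx : x ≠ 0) (hy : y ≠ 0) :
    LinearIndependent ℝ ![x, y] ↔ cos (angle x y) ^ 2 ≠ 1 := by
  rw [← det_gram_ne_zero_iff_linearIndependent, det_gram_fin_two]
  simp [hx, hy, sub_eq_zero, eq_comm (a := (1 : ℝ))]

theorem linearIndependent_triple_iff_gramCos_ne_zero {x y z : E} (hx : x ≠ 0) (hy : y ≠ 0)
    (hz : z ≠ 0) :
    LinearIndependent ℝ ![x, y, z] ↔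
      gramCos (cos (angle x y)) (cos (angle y z)) (cos (angle x z)) ≠ 0 := by
  rw [← det_gram_ne_zero_iff_linearIndependent, det_gram_fin_three]
  simp [hx, hy, hz]

theorem mem_span_pair_of_gramCos_eq_zero {x y z : E} (hx : x ≠ 0) (hy : y ≠ 0) (hz : z ≠ 0)
    (hxy : cos (angle x y) ^ 2 ≠ 1)
    (h : gramCos (cos (angle x y)) (cos (angle y z)) (cos (angle x z)) = 0) :
    z ∈ span ℝ {x, y} := by
  by_contra hmem
  have hind : LinearIndependent ℝ ![z, x, y] := by
    refine linearIndependent_finCons.2 ⟨(linearIndependent_pair_iff_cos_sq_ne_one hx hy).2 hxy, ?_⟩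
    simpa [Matrix.range_cons, Set.pair_comm] using hmem
  refine (linearIndependent_triple_iff_gramCos_ne_zero hz hx hy).1 hind ?_
  rw [InnerProductGeometry.angle_comm z x, InnerProductGeometry.angle_comm z y]
  unfold gramCos at h ⊢
  linear_combination h

theorem mem_span_pair_of_rhomboid {p q r s : E} (hp : p ≠ 0) (hq : q ≠ 0) (hr : r ≠ 0)
    (hs : s ≠ 0) {σ : ℝ} (hσ : σ ^ 2 = 1) (hrs : cos (angle r s) = σ * cos (angle p q))
    (hsp : cos (angle s p) = σ * cos (angle q r))
    (hpqr : cos (angle p q) ^ 2 ≠ cos (angle q r) ^ 2)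
    (hdep : ¬ LinearIndependent ℝ ![p, q, r]) :
    q ∈ span ℝ {p, r} ∧ s ∈ span ℝ {p, r} := by
  set a := cos (angle p q)
  set b := cos (angle q r)
  set t := cos (angle p r)
  have hG : gramCos a b t = 0 := by
    simpa [linearIndependent_triple_iff_gramCos_ne_zero hp hq hr] using hdep
  have hpr : t ^ 2 ≠ 1 := fun h => gramCos_ne_zero_of_sq_eq_one hpqr h hG
  refine ⟨mem_span_pair_of_gramCos_eq_zero hp hr hq hpr ?_,
    mem_span_pair_of_gramCos_eq_zero hp hr hs hpr ?_⟩
  · rw [InnerProductGeometry.angle_comm r q]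
    unfold gramCos at hG ⊢
    linear_combination hG
  · rw [hrs, InnerProductGeometry.angle_comm p s, hsp]
    unfold gramCos at hG ⊢
    linear_combination hG + (2 * a * b * t - a ^ 2 - b ^ 2) * hσ

theorem mem_span_pair_of_cyclic_rhomboid {x : ZMod 4 → E} (hx : ∀ j, x j ≠ 0)
    {c : ZMod 4 → ℝ} (hc : ∀ j, cos (angle (x j) (x (j + 1))) = c j) {σ : ℝ} (hσ : σ ^ 2 = 1)
    (hσc : ∀ j, c (j + 2) = σ * c j) (hc01 : c 0 ^ 2 ≠ c 1 ^ 2) {i : ZMod 4}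
    (hdep : ¬ LinearIndependent ℝ ![x (i - 1), x i, x (i + 1)]) (j : ZMod 4) :
    x j ∈ span ℝ {x (i - 1), x (i + 1)} := by
  have hc' : ∀ j k, k = j + 1 → cos (angle (x j) (x k)) = c j := by rintro j _ rfl; exact hc j
  have hne := ZMod.four_ne_add_one_of_add_two_eq (f := fun j => c j ^ 2)
    (fun j => by simp only [hσc, mul_pow, hσ, one_mul]) hc01 (i - 1)
  rw [sub_add_cancel] at hne
  obtain ⟨hxi, hxi2⟩ := mem_span_pair_of_rhomboid (hx (i - 1)) (hx i) (hx (i + 1)) (hx (i + 2)) hσ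
    (by rw [hc' _ (i + 2) (by ring), hc' (i - 1) i (by ring), ← hσc]; congr 1; ring)
    (by rw [hc' _ (i - 1) (by grind), hc' i _ rfl, hσc])
    (by rwa [hc' (i - 1) i (by ring), hc' i _ rfl])
    hdep
  obtain rfl | rfl | rfl | rfl := ZMod.four_cases_rel i j
  exacts [subset_span (by simp), hxi, subset_span (by simp), hxi2]

end InnerProductSpace

section AffineSpace

variable {k V P : Type*} [Field k] [AddCommGroup V] [Module k V] [AddTorsor V P]

theorem Coplanar.not_linearIndependent_vsub {v a b c : P} (h : Coplanar k {v, a, b, c}) :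
    ¬ LinearIndependent k ![a -ᵥ v, b -ᵥ v, c -ᵥ v] := by
  intro hind
  have := h.finiteDimensional_vectorSpan
  have hle : span k (Set.range ![a -ᵥ v, b -ᵥ v, c -ᵥ v]) ≤ vectorSpan k {v, a, b, c} := by
    rw [vectorSpan_eq_span_vsub_set_right k (Set.mem_insert v _)]
    exact span_mono (by simp [Matrix.range_cons, Set.insert_subset_iff])
  have h3 := (finrank_span_eq_card hind).symm.trans_le (finrank_mono hle)
  rw [Fintype.card_fin] at h3
  exact absurd (h3.trans h.finrank_le_two) (by norm_num)

theorem coplanar_of_vsub_mem_span_pair {s : Set P} {v : P} (hv : v ∈ s) {x y : V}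
    (h : ∀ p ∈ s, p -ᵥ v ∈ span k {x, y}) : Coplanar k s := by
  refine (rank_mono (?_ : vectorSpan k s ≤ span k {x, y})).trans ?_
  · rw [vectorSpan_eq_span_vsub_set_right k hv, span_le]
    rintro _ ⟨p, hp, rfl⟩
    exact h p hp
  · calc Module.rank k (span k {x, y}) ≤ Cardinal.mk ({x, y} : Set V) := rank_span_le _
      _ ≤ Cardinal.mk ({y} : Set V) + 1 := Cardinal.mk_insert_le
      _ = 2 := by rw [Cardinal.mk_singleton, one_add_one_eq_two]

end AffineSpace

/-- Flatness of a rhomboid pyramid: for a pyramid with apex `v` and base `w 0, …, w 3`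
(indices mod 4) whose opposite apex angles are pairwise equal or pairwise
supplementary, and which is not a lozenge (`cos² α₁ ≠ cos² α₂`), if the four points
`v, w (i−1), w i, w (i+1)` are coplanar for some `i`, then all five points are
coplanar; conversely, if all five points are coplanar then the four points
`v, w (i−1), w i, w (i+1)` are coplanar for every `i`. -/
theorem rhomboid_flat
    (v : Pt) (w : ZMod 4 → Pt)
    (hncol : ∀ i : ZMod 4, ¬ Collinear ℝ ({v, w i, w (i + 1)} : Set Pt))
    (α : ZMod 4 → ℝ)
    (hα : ∀ i : ZMod 4, α i = ∠ (w i) v (w (i + 1)))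
    (hrhomboid : (α 0 = α 2 ∧ α 1 = α 3) ∨ (α 0 + α 2 = Real.pi ∧ α 1 + α 3 = Real.pi))
    (hnotloz : Real.cos (α 0) ^ 2 ≠ Real.cos (α 1) ^ 2) :
    ((∃ i : ZMod 4, Coplanar ℝ ({v, w (i - 1), w i, w (i + 1)} : Set Pt)) →
        Coplanar ℝ ({v, w 0, w 1, w 2, w 3} : Set Pt)) ∧
    (Coplanar ℝ ({v, w 0, w 1, w 2, w 3} : Set Pt) →
        ∀ i : ZMod 4, Coplanar ℝ ({v, w (i - 1), w i, w (i + 1)} : Set Pt)) := by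
  refine ⟨fun ⟨i, hcop⟩ => ?_, fun h i => h.subset ?_⟩
  · obtain ⟨σ, hσ, hσα⟩ := exists_sign_cos_add_two hrhomboid
    have hspan := mem_span_pair_of_cyclic_rhomboid (x := fun j => w j -ᵥ v)
      (fun j => vsub_ne_zero.2 (ne₁₂_of_not_collinear (hncol j)).symm)
      (c := fun j => cos (α j)) (fun j => by rw [hα j]; rfl) hσ hσα hnotloz
      hcop.not_linearIndependent_vsub
    refine coplanar_of_vsub_mem_span_pair (Set.mem_insert v _) (x := w (i - 1) -ᵥ v)
      (y := w (i + 1) -ᵥ v) fun p hp => ?_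
    obtain rfl | rfl | rfl | rfl | rfl := hp
    exacts [by simp [zero_mem], hspan 0, hspan 1, hspan 2, hspan 3]
  · have hw : ∀ j, w j ∈ ({v, w 0, w 1, w 2, w 3} : Set Pt) := fun j => by
      obtain rfl | rfl | rfl | rfl := ZMod.four_cases j <;> simp
    simp [Set.insert_subset_iff, hw]
end
end

section
/- Let a, b, c, d ∈ ℝ³ be coplanar points such that a, b, c are not collinear and a ≠ c. If dist(a,b) = dist(c,d) and dist(b,c) = dist(a,d), then either b − a = c − d (the quadrilateral a b c d is a parallelogram), or the reflection of ℝ³ across the perpendicular bisector plane of the segment from a to c maps b to d (and swaps a with c), i.e. the quadrilateral a b c d is an antiparallelogram. -/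
open EuclideanGeometry

noncomputable section

/-! The point reflection of `b` in the midpoint of `ac` and the reflection of `b` across the
perpendicular bisector of `ac` both lie in the plane `abc`, at distance `|bc|` from `a` and `|ab|`
from `c`, and they differ because `b` is off the line `ac`. Two circles with distinct centres in a
plane meet in at most two points, so `d`, which lies on the same two circles, is one of them. -/

open AffineSubspace Module

theorem Coplanar.mem_affineSpan_of_not_collinear {k V P : Type*} [DivisionRing k] [AddCommGroup V]
    [Module k V] [AddTorsor V P] {s : Set P} {p : P} (hcop : Coplanar k (insert p s))
    (hs : ¬Collinear k s) : p ∈ affineSpan k s := by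
  have hle : vectorSpan k s ≤ vectorSpan k (insert p s) :=
    vectorSpan_mono k (Set.subset_insert p s)
  have := hcop.finiteDimensional_vectorSpan
  have : FiniteDimensional k (vectorSpan k s) := Submodule.finiteDimensional_of_le hle
  have hspan : vectorSpan k s = vectorSpan k (insert p s) := by
    refine Submodule.eq_of_le_of_finrank_le hle ?_
    have := hcop.finrank_le_two
    have := (not_congr collinear_iff_finrank_le_one).mp hs
    omega
  obtain ⟨q, hq⟩ : s.Nonempty :=
    Set.nonempty_iff_ne_empty.mpr (by rintro rfl; exact hs (collinear_empty k P))
  have hqs : q ∈ affineSpan k s := subset_affineSpan k s hq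
  have : p -ᵥ q ∈ (affineSpan k s).direction := by
    rw [direction_affineSpan, hspan]
    exact vsub_mem_vectorSpan k (Set.mem_insert p s) (Set.mem_insert_of_mem p hq)
  simpa using vadd_mem_of_mem_direction this hqs

section Euclidean

variable {V P : Type*} [NormedAddCommGroup V] [InnerProductSpace ℝ V] [MetricSpace P]
  [NormedAddTorsor V P]

instance (a c : P) : Nonempty (perpBisector a c) :=
  ⟨⟨midpoint ℝ a c, midpoint_mem_perpBisector a c⟩⟩

variable {a c : P}

theorem AffineSubspace.pointReflection_mem {s : AffineSubspace ℝ P} {x y : P} (hx : x ∈ s)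
    (hy : y ∈ s) : AffineIsometryEquiv.pointReflection ℝ x y ∈ s := by
  rw [AffineIsometryEquiv.pointReflection_apply]
  exact vadd_mem_of_mem_direction (vsub_mem_direction hx hy) hx

theorem dist_pointReflection_midpoint_left (p : P) :
    dist (AffineIsometryEquiv.pointReflection ℝ (midpoint ℝ a c) p) a = dist p c := by
  have := (AffineIsometryEquiv.pointReflection ℝ (midpoint ℝ a c)).dist_map p c
  rwa [AffineIsometryEquiv.pointReflection_midpoint_right] at this

theorem dist_pointReflection_midpoint_right (p : P) :
    dist (AffineIsometryEquiv.pointReflection ℝ (midpoint ℝ a c) p) c = dist p a := by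
  have := (AffineIsometryEquiv.pointReflection ℝ (midpoint ℝ a c)).dist_map p a
  rwa [AffineIsometryEquiv.pointReflection_midpoint_left] at this

variable [(perpBisector a c).direction.HasOrthogonalProjection]

theorem reflection_perpBisector_left : reflection (perpBisector a c) a = c := by
  have hm := midpoint_mem_perpBisector a c
  have hv : a -ᵥ midpoint ℝ a c ∈ (perpBisector a c).directionᗮ := by
    rw [direction_perpBisector]
    refine Submodule.le_orthogonal_orthogonal _ ?_
    rw [left_vsub_midpoint, ← neg_vsub_eq_vsub_rev c a]
    exact Submodule.smul_mem _ _ (Submodule.neg_mem _ (Submodule.mem_span_singleton_self _))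
  have := reflection_orthogonal_vadd hm hv
  rwa [vsub_vadd, neg_vsub_eq_vsub_rev, ← Equiv.pointReflection_apply,
    Equiv.pointReflection_midpoint_left] at this

theorem reflection_perpBisector_right : reflection (perpBisector a c) c = a := by
  have h := reflection_reflection (perpBisector a c) a
  rwa [reflection_perpBisector_left] at h

theorem reflection_perpBisector_vsub_mem_span (p : P) :
    reflection (perpBisector a c) p -ᵥ p ∈ ℝ ∙ (c -ᵥ a) := by
  have hdir : (perpBisector a c).directionᗮ = ℝ ∙ (c -ᵥ a) := by
    rw [direction_perpBisector, Submodule.orthogonal_orthogonal]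
  have h := hdir ▸ orthogonalProjection_vsub_mem_direction_orthogonal (perpBisector a c) p
  rw [reflection_apply', vadd_vsub_assoc]
  exact Submodule.add_mem _ h h

theorem reflection_perpBisector_mem {s : AffineSubspace ℝ P} {p : P} (ha : a ∈ s) (hc : c ∈ s)
    (hp : p ∈ s) : reflection (perpBisector a c) p ∈ s := by
  have hdir : ℝ ∙ (c -ᵥ a) ≤ s.direction :=
    (Submodule.span_singleton_le_iff_mem _ _).mpr (vsub_mem_direction hc ha)
  rw [← vsub_vadd (reflection (perpBisector a c) p) p]
  exact vadd_mem_of_mem_direction (hdir (reflection_perpBisector_vsub_mem_span p)) hp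

theorem reflection_perpBisector_ne_pointReflection {p : P} (hp : p ∉ line[ℝ, a, c]) :
    reflection (perpBisector a c) p ≠
      AffineIsometryEquiv.pointReflection ℝ (midpoint ℝ a c) p := by
  intro h
  have hspan := reflection_perpBisector_vsub_mem_span (a := a) (c := c) p
  rw [h, AffineIsometryEquiv.pointReflection_apply, vadd_vsub_assoc, ← two_smul ℝ,
    Submodule.smul_mem_iff _ two_ne_zero, ← vectorSpan_pair_rev,
    ← direction_affineSpan] at hspan
  have hm : midpoint ℝ a c ∈ line[ℝ, a, c] :=
    AffineMap.lineMap_mem _ (left_mem_affineSpan_pair ℝ a c) (right_mem_affineSpan_pair ℝ a c)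
  exact hp ((vsub_right_mem_direction_iff_mem hm p).mp (by simpa using Submodule.neg_mem _ hspan))

theorem dist_reflection_perpBisector_left (p : P) :
    dist (reflection (perpBisector a c) p) a = dist p c := by
  have := (reflection (perpBisector a c)).dist_map p c
  rwa [reflection_perpBisector_right] at this

theorem dist_reflection_perpBisector_right (p : P) :
    dist (reflection (perpBisector a c) p) c = dist p a := by
  have := (reflection (perpBisector a c)).dist_map p a
  rwa [reflection_perpBisector_left] at this

theorem eq_pointReflection_or_eq_reflection_perpBisector {b d : P}
    (hcop : Coplanar ℝ ({a, b, c, d} : Set P)) (hncol : ¬Collinear ℝ ({a, b, c} : Set P))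
    (h₁ : dist a b = dist c d) (h₂ : dist b c = dist a d) :
    d = AffineIsometryEquiv.pointReflection ℝ (midpoint ℝ a c) b ∨
      d = reflection (perpBisector a c) b := by
  set s := affineSpan ℝ ({a, b, c} : Set P)
  have hplane : finrank ℝ s.direction = 2 := by
    have := (coplanar_triple ℝ a b c).finrank_le_two
    have := (not_congr collinear_iff_finrank_le_one).mp hncol
    rw [direction_affineSpan]
    omega
  have ha : a ∈ s := mem_affineSpan ℝ (by simp)
  have hb : b ∈ s := mem_affineSpan ℝ (by simp)
  have hc : c ∈ s := mem_affineSpan ℝ (by simp)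
  have hd : d ∈ s := by
    refine Coplanar.mem_affineSpan_of_not_collinear (hcop.subset ?_) hncol
    intro x hx
    simp only [Set.mem_insert_iff, Set.mem_singleton_iff] at hx ⊢
    tauto
  have hb_line : b ∉ line[ℝ, a, c] := fun h =>
    hncol (Set.insert_comm a b {c} ▸ collinear_insert_of_mem_affineSpan_pair h)
  have hm : midpoint ℝ a c ∈ s := AffineMap.lineMap_mem _ ha hc
  exact eq_of_dist_eq_of_dist_eq_of_mem_of_finrank_eq_two hplane ha hc
    (AffineSubspace.pointReflection_mem hm hb) (reflection_perpBisector_mem ha hc hb) hd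
    (ne₁₃_of_not_collinear hncol) (reflection_perpBisector_ne_pointReflection hb_line).symm
    (dist_pointReflection_midpoint_left b) (dist_reflection_perpBisector_left b)
    (by rw [dist_comm, h₂]) (dist_pointReflection_midpoint_right b)
    (dist_reflection_perpBisector_right b) (by rw [dist_comm, ← h₁, dist_comm])

end Euclidean

theorem parallelogram_or_antiparallelogram_general
    (a b c d : Pt)
    (hcop : Coplanar ℝ ({a, b, c, d} : Set Pt))
    (hncol : ¬ Collinear ℝ ({a, b, c} : Set Pt))
    (h₁ : dist a b = dist c d)
    (h₂ : dist b c = dist a d) :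
    b - a = c - d ∨
      (haveI : Nonempty (AffineSubspace.perpBisector a c) :=
        ⟨⟨midpoint ℝ a c, AffineSubspace.midpoint_mem_perpBisector a c⟩⟩
       EuclideanGeometry.reflection (AffineSubspace.perpBisector a c) b = d) := by
  rcases eq_pointReflection_or_eq_reflection_perpBisector hcop hncol h₁ h₂ with h | h
  · left
    have hmid : midpoint ℝ b d = midpoint ℝ a c := midpoint_eq_iff.mpr h.symm
    simpa using (midpoint_eq_midpoint_iff_vsub_eq_vsub ℝ).mp hmid
  · exact Or.inr h.symm

/-- A planar quadrilateral `a b c d` whose opposite sides have equal lengths and whose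
vertices `a, b, c` are not collinear is either a parallelogram (`b − a = c − d`) or an
antiparallelogram: the reflection of `ℝ³` across the perpendicular bisector plane of
the segment from `a` to `c` (which swaps `a` and `c`) maps `b` to `d`. -/
theorem parallelogram_or_antiparallelogram
    (a b c d : Pt)
    (hcop : Coplanar ℝ ({a, b, c, d} : Set Pt))
    (hncol : ¬ Collinear ℝ ({a, b, c} : Set Pt))
    (hac : a ≠ c)
    (h₁ : dist a b = dist c d)
    (h₂ : dist b c = dist a d) :
    b - a = c - d ∨
      (haveI : Nonempty (AffineSubspace.perpBisector a c) :=
        ⟨⟨midpoint ℝ a c, AffineSubspace.midpoint_mem_perpBisector a c⟩⟩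
       EuclideanGeometry.reflection (AffineSubspace.perpBisector a c) b = d) :=
  parallelogram_or_antiparallelogram_general a b c d hcop hncol h₁ h₂
end
end

section
/- Let p1, …, p6 ∈ ℝ³. Assume: p3, p4, p5, p6 lie in a 2-dimensional affine subspace P; p5 ≠ p6; p1 ∉ P; the reflection of ℝ³ across P maps p1 to p2; and the affine span Q of {p1, p2, p5, p6} is 2-dimensional. Then the reflection of p3 across the plane Q equals the reflection of p3 across the line through p5 and p6 (the affine span of {p5, p6}). -/
/-!
The mirror vector `v = p₂ - p₁` is orthogonal to `P`, and `w = p₅ - p₆` lies in `P`. Since `Q` is a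
plane containing the orthogonal nonzero vectors `v` and `w`, its direction is spanned by them. If
`m` is the foot of `p₃` on the line `p₅p₆`, then `p₃ - m` lies in `P` (so is orthogonal to `v`) and
is orthogonal to `w`, hence to `Q`; so `m` is also the foot of `p₃` on `Q`, and the two reflections,
both equal to `2m - p₃`, agree.
-/

open EuclideanGeometry

noncomputable section

open Module Submodule
open scoped InnerProductSpace

section

variable {𝕜 E : Type*} [RCLike 𝕜] [NormedAddCommGroup E] [InnerProductSpace 𝕜 E]

theorem Submodule.span_pair_eq_of_inner_eq_zero_of_finrank_eq_two {K : Submodule 𝕜 E}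
    (hK : finrank 𝕜 K = 2) {v w : E} (hv : v ∈ K) (hw : w ∈ K) (hv₀ : v ≠ 0) (hw₀ : w ≠ 0)
    (hvw : ⟪v, w⟫_𝕜 = 0) : span 𝕜 {v, w} = K := by
  have : FiniteDimensional 𝕜 K := Module.finite_of_finrank_eq_succ hK
  refine eq_of_le_of_finrank_le
    (span_le.mpr (Set.insert_subset hv (Set.singleton_subset_iff.mpr hw))) ?_
  have hli : LinearIndependent 𝕜 ![v, w] :=
    linearIndependent_of_ne_zero_of_inner_eq_zero (by simp [Fin.forall_fin_two, hv₀, hw₀])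
      (fun i j hij => by fin_cases i <;> fin_cases j <;> simp_all [inner_eq_zero_symm])
  rw [hK, ← Matrix.range_cons_cons_empty, finrank_span_eq_card hli, Fintype.card_fin]

end

section

variable {𝕜 V P : Type*} [RCLike 𝕜] [NormedAddCommGroup V] [InnerProductSpace 𝕜 V]
  [MetricSpace P] [NormedAddTorsor V P]

theorem EuclideanGeometry.reflection_vsub_self_mem_direction_orthogonal
    (s : AffineSubspace 𝕜 P) [Nonempty s] [s.direction.HasOrthogonalProjection] (p : P) :
    reflection s p -ᵥ p ∈ s.directionᗮ := by
  have h := vsub_orthogonalProjection_mem_direction_orthogonal s p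
  rw [reflection_apply', vadd_vsub_assoc, ← neg_vsub_eq_vsub_rev p, ← two_smul 𝕜]
  exact smul_mem _ _ (neg_mem h)

theorem EuclideanGeometry.reflection_eq_reflection_of_direction_le_sup
    {L Q S : AffineSubspace 𝕜 P} [Nonempty L] [Nonempty Q] [L.direction.HasOrthogonalProjection]
    [Q.direction.HasOrthogonalProjection] {K : Submodule 𝕜 V} (hLQ : L ≤ Q) (hLS : L ≤ S)
    (hKS : K ⟂ S.direction) (hQ : Q.direction ≤ K ⊔ L.direction) {p : P} (hp : p ∈ S) :
    reflection Q p = reflection L p := by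
  rw [reflection_eq_iff_orthogonalProjection_eq, coe_orthogonalProjection_eq_iff_mem]
  refine ⟨hLQ (orthogonalProjection_mem p), orthogonal_le hQ ?_⟩
  rw [← inf_orthogonal]
  exact ⟨hKS.symm.le (S.vsub_mem_direction hp (hLS (orthogonalProjection_mem p))),
    vsub_orthogonalProjection_mem_direction_orthogonal L p⟩

end

theorem reflection_plane_eq_reflection_line
    (p₁ p₂ p₃ p₅ p₆ : Pt)
    (P : AffineSubspace ℝ Pt) [Nonempty P]
    (hp₃ : p₃ ∈ P) (hp₅ : p₅ ∈ P) (hp₆ : p₆ ∈ P)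
    (hne : p₅ ≠ p₆)
    (hp₁ : p₁ ∉ P)
    (hrefl : EuclideanGeometry.reflection P p₁ = p₂)
    (hQdim : Module.finrank ℝ (affineSpan ℝ ({p₁, p₂, p₅, p₆} : Set Pt)).direction = 2) :
    haveI : Nonempty (affineSpan ℝ ({p₁, p₂, p₅, p₆} : Set Pt)) :=
      ⟨⟨p₁, subset_affineSpan ℝ _ (by simp)⟩⟩
    haveI : Nonempty (affineSpan ℝ ({p₅, p₆} : Set Pt)) :=
      ⟨⟨p₅, subset_affineSpan ℝ _ (by simp)⟩⟩
    EuclideanGeometry.reflection (affineSpan ℝ ({p₁, p₂, p₅, p₆} : Set Pt)) p₃ =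
      EuclideanGeometry.reflection (affineSpan ℝ ({p₅, p₆} : Set Pt)) p₃ := by
  set Q := affineSpan ℝ ({p₁, p₂, p₅, p₆} : Set Pt)
  have hLQ : line[ℝ, p₅, p₆] ≤ Q :=
    affineSpan_mono ℝ ((Set.subset_insert _ _).trans (Set.subset_insert _ _))
  have hmem : ∀ p ∈ ({p₁, p₂, p₅, p₆} : Set Pt), p ∈ Q := fun p hp => subset_affineSpan ℝ _ hp
  have hv : p₂ -ᵥ p₁ ∈ P.directionᗮ := hrefl ▸ reflection_vsub_self_mem_direction_orthogonal P p₁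
  have hv₀ : p₂ -ᵥ p₁ ≠ 0 := by
    rwa [vsub_ne_zero, ← hrefl, Ne, EuclideanGeometry.reflection_eq_self_iff]
  have hQ : span ℝ {p₂ -ᵥ p₁, p₅ -ᵥ p₆} = Q.direction :=
    span_pair_eq_of_inner_eq_zero_of_finrank_eq_two hQdim
      (Q.vsub_mem_direction (hmem _ (by simp)) (hmem _ (by simp)))
      (Q.vsub_mem_direction (hmem _ (by simp)) (hmem _ (by simp))) hv₀ (vsub_ne_zero.mpr hne)
      (inner_left_of_mem_orthogonal (P.vsub_mem_direction hp₅ hp₆) hv)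
  refine reflection_eq_reflection_of_direction_le_sup (K := ℝ ∙ (p₂ -ᵥ p₁)) hLQ
    (affineSpan_pair_le_of_mem_of_mem hp₅ hp₆) ?_ ?_ hp₃
  · exact isOrtho_iff_le.mpr ((span_singleton_le_iff_mem _ _).mpr hv)
  · rw [← hQ, span_insert, direction_affineSpan, vectorSpan_pair]
end
end

section
/- Let λ be a labeling of the octahedral graph G_oct such that some face {i, j, k} is degenerate, meaning λ({i,k}) = λ({i,j}) + λ({j,k}) for some ordering of its vertices. Then λ is not flexible: there are only finitely many pairwise non-congruent realizations compatible with λ. -/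
/-!
If `λ({i,k}) = λ({i,j}) + λ({j,k})`, every compatible realization puts `ρ j` on the segment from
`ρ i` to `ρ k`. Stewart's theorem then makes the squared distances from any point to `ρ i`, `ρ j`,
`ρ k` satisfy one linear relation with nonzero coefficients depending only on `λ`. Each diagonal
of the octahedron joins a vertex of the face to the opposite vertex, which is adjacent to the other
two vertices of the face, so its length is determined by `λ`. Hence all pairwise distances of a
compatible realization are determined, and any two compatible realizations are congruent.
-/

open EuclideanGeometry

noncomputable section

/-- Two realizations are congruent if they differ by an isometry of `ℝ³`. -/
def OctCongruent (ρ₁ ρ₂ : ℕ → Pt) : Prop :=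
  ∃ σ : Pt ≃ᵢ Pt, ∀ i ∈ octV, ρ₁ i = σ (ρ₂ i)

open AffineSubspace

instance AffineSubspace.instNonemptyPerpBisector {V P : Type*} [NormedAddCommGroup V]
    [InnerProductSpace ℝ V] [MetricSpace P] [NormedAddTorsor V P] (x y : P) :
    Nonempty (perpBisector x y) :=
  perpBisector_nonempty.to_subtype

theorem reflection_perpBisector_right_s15 {V P : Type*} [NormedAddCommGroup V]
    [InnerProductSpace ℝ V] [FiniteDimensional ℝ V] [MetricSpace P] [NormedAddTorsor V P]
    (x y : P) : reflection (perpBisector x y) y = x := by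
  have hv : y -ᵥ midpoint ℝ x y ∈ (perpBisector x y).directionᗮ := by
    rw [direction_perpBisector, Submodule.orthogonal_orthogonal, right_vsub_midpoint]
    exact Submodule.smul_mem _ _ (Submodule.mem_span_singleton_self _)
  have := reflection_orthogonal_vadd (midpoint_mem_perpBisector x y) hv
  rwa [vsub_vadd, neg_vsub_eq_vsub_rev, ← Equiv.pointReflection_apply,
    Equiv.pointReflection_midpoint_right] at this

/- The points are moved into place one at a time by reflecting in the perpendicular bisector of
the next point and its target, which fixes the points already placed. -/
theorem exists_affineIsometryEquiv_eq_of_dist_eq {ι V P : Type*} [NormedAddCommGroup V]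
    [InnerProductSpace ℝ V] [FiniteDimensional ℝ V] [MetricSpace P] [NormedAddTorsor V P]
    (f g : ι → P) (s : Finset ι) (h : ∀ m ∈ s, ∀ n ∈ s, dist (f m) (f n) = dist (g m) (g n)) :
    ∃ σ : P ≃ᵃⁱ[ℝ] P, ∀ m ∈ s, f m = σ (g m) := by
  classical
  induction s using Finset.induction_on with
  | empty => exact ⟨AffineIsometryEquiv.refl ℝ P, by simp⟩
  | insert a s _ ih =>
    obtain ⟨σ, hσ⟩ := ih fun m hm n hn => h m (by simp [hm]) n (by simp [hn])
    refine ⟨σ.trans (reflection (perpBisector (f a) (σ (g a)))), ?_⟩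
    simp only [Finset.mem_insert, forall_eq_or_imp, AffineIsometryEquiv.coe_trans,
      Function.comp_apply]
    refine ⟨(reflection_perpBisector_right_s15 _ _).symm, fun m hm => ?_⟩
    have hfix : f m ∈ perpBisector (f a) (σ (g a)) := by
      rw [mem_perpBisector_iff_dist_eq, h m (by simp [hm]) a (by simp), ← σ.dist_map, ← hσ m hm]
    rw [← hσ m hm, (reflection_eq_self_iff _).mpr hfix]

theorem dist_sq_mul_dist_add_dist_sq_mul_dist_of_dist_add_dist_eq {V P : Type*}
    [NormedAddCommGroup V] [InnerProductSpace ℝ V] [MetricSpace P] [NormedAddTorsor V P]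
    {a b c : P} (hab : a ≠ b) (hbc : b ≠ c) (h : dist a b + dist b c = dist a c) (p : P) :
    dist p a ^ 2 * dist b c + dist p c ^ 2 * dist a b =
      dist a c * (dist p b ^ 2 + dist a b * dist b c) := by
  have hπ : ∠ a b c = Real.pi :=
    (show Sbtw ℝ a b c from ⟨dist_add_dist_eq_iff.mp h, hab.symm, hbc⟩).angle₁₂₃_eq_pi
  rw [← dist_comm c b]
  exact dist_sq_mul_dist_add_dist_sq_mul_dist p a c b hπ

def octAntipode : ℕ → ℕ
  | 1 => 2 | 2 => 1 | 3 => 4 | 4 => 3 | 5 => 6 | 6 => 5 | _ => 0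

instance inst_s15 (i j : ℕ) : Decidable (IsOctEdge i j) := inferInstanceAs (Decidable (_ ∧ _))

instance (i j k : ℕ) : Decidable (IsOctFace i j k) := inferInstanceAs (Decidable (_ ∈ _))

namespace IsOctFace

variable {i j k : ℕ}

theorem mem_octV_s15 (h : IsOctFace i j k) : i ∈ octV ∧ j ∈ octV ∧ k ∈ octV := by
  have hsub : ({i, j, k} : Finset ℕ) ⊆ octV := by
    unfold IsOctFace at h; generalize ({i, j, k} : Finset ℕ) = F at h ⊢; revert F; decide
  exact ⟨hsub (by simp), hsub (by simp), hsub (by simp)⟩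

theorem isOctEdge_s15 (h : IsOctFace i j k) :
    IsOctEdge i j ∧ IsOctEdge j k ∧ IsOctEdge i k ∧
      IsOctEdge (octAntipode i) j ∧ IsOctEdge (octAntipode i) k ∧
      IsOctEdge (octAntipode j) i ∧ IsOctEdge (octAntipode j) k ∧
      IsOctEdge (octAntipode k) i ∧ IsOctEdge (octAntipode k) j := by
  obtain ⟨hi, hj, hk⟩ := h.mem_octV_s15
  -- reverting in this order leaves bounded quantifiers `∀ i ∈ octV, …`, which `decide` evaluates
  revert h; revert k; revert j; revert i; decide

theorem eq_or_isOctEdge_or_antipodal (h : IsOctFace i j k) {m n : ℕ} (hm : m ∈ octV)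
    (hn : n ∈ octV) :
    m = n ∨ IsOctEdge m n ∨ s(m, n) = s(octAntipode i, i) ∨ s(m, n) = s(octAntipode j, j) ∨
      s(m, n) = s(octAntipode k, k) := by
  obtain ⟨hi, hj, hk⟩ := h.mem_octV_s15
  revert n; revert m; revert h; revert k; revert j; revert i; decide

end IsOctFace

namespace Compatible

variable {lam : Sym2 ℕ → ℝ} {ρ₁ ρ₂ : ℕ → Pt}

theorem dist_eq_of_degenerate_face (h₁ : Compatible lam ρ₁) (h₂ : Compatible lam ρ₂)
    (hpos : ∀ i j, IsOctEdge i j → 0 < lam s(i, j)) {i j k : ℕ} (hface : IsOctFace i j k)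
    (hdeg : lam s(i, k) = lam s(i, j) + lam s(j, k)) :
    ∀ m ∈ octV, ∀ n ∈ octV, dist (ρ₁ m) (ρ₁ n) = dist (ρ₂ m) (ρ₂ n) := by
  obtain ⟨hij, hjk, hik, hi'j, hi'k, hj'i, hj'k, hk'i, hk'j⟩ := hface.isOctEdge_s15
  set a := lam s(i, j)
  set b := lam s(j, k)
  have ha : 0 < a := hpos i j hij
  have hb : 0 < b := hpos j k hjk
  have stewart : ∀ ρ, Compatible lam ρ → ∀ m,
      dist (ρ m) (ρ i) ^ 2 * b + dist (ρ m) (ρ k) ^ 2 * a - (a + b) * dist (ρ m) (ρ j) ^ 2 =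
        (a + b) * a * b := by
    intro ρ hρ m
    have hρij : ρ i ≠ ρ j := dist_pos.mp ((hρ i j hij).trans_gt ha)
    have hρjk : ρ j ≠ ρ k := dist_pos.mp ((hρ j k hjk).trans_gt hb)
    have := dist_sq_mul_dist_add_dist_sq_mul_dist_of_dist_add_dist_eq hρij hρjk
      (by rw [hρ i j hij, hρ j k hjk, hρ i k hik, hdeg]) (ρ m)
    rw [hρ i j hij, hρ j k hjk, hρ i k hik, hdeg] at this
    linarith
  have stewart_eq (m : ℕ) := (stewart ρ₁ h₁ m).trans (stewart ρ₂ h₂ m).symm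
  have eq_of_sq {x y x' y' : Pt} (h : dist x y ^ 2 = dist x' y' ^ 2) : dist x y = dist x' y' :=
    (sq_eq_sq₀ dist_nonneg dist_nonneg).mp h
  have hi : dist (ρ₁ (octAntipode i)) (ρ₁ i) = dist (ρ₂ (octAntipode i)) (ρ₂ i) := by
    have e := stewart_eq (octAntipode i)
    rw [h₁ _ _ hi'j, h₁ _ _ hi'k, h₂ _ _ hi'j, h₂ _ _ hi'k] at e
    exact eq_of_sq (mul_right_cancel₀ hb.ne' (by linarith))
  have hj : dist (ρ₁ (octAntipode j)) (ρ₁ j) = dist (ρ₂ (octAntipode j)) (ρ₂ j) := by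
    have e := stewart_eq (octAntipode j)
    rw [h₁ _ _ hj'i, h₁ _ _ hj'k, h₂ _ _ hj'i, h₂ _ _ hj'k] at e
    exact eq_of_sq (mul_left_cancel₀ (add_pos ha hb).ne' (by linarith))
  have hk : dist (ρ₁ (octAntipode k)) (ρ₁ k) = dist (ρ₂ (octAntipode k)) (ρ₂ k) := by
    have e := stewart_eq (octAntipode k)
    rw [h₁ _ _ hk'i, h₁ _ _ hk'j, h₂ _ _ hk'i, h₂ _ _ hk'j] at e
    exact eq_of_sq (mul_right_cancel₀ ha.ne' (by linarith))
  have of_sym2_eq {m n x y : ℕ} (hs : s(m, n) = s(x, y))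
      (hxy : dist (ρ₁ x) (ρ₁ y) = dist (ρ₂ x) (ρ₂ y)) :
      dist (ρ₁ m) (ρ₁ n) = dist (ρ₂ m) (ρ₂ n) := by
    rcases Sym2.eq_iff.mp hs with ⟨rfl, rfl⟩ | ⟨rfl, rfl⟩
    exacts [hxy, by rw [dist_comm, hxy, dist_comm]]
  intro m hm n hn
  rcases hface.eq_or_isOctEdge_or_antipodal hm hn with rfl | he | hs | hs | hs
  · simp only [dist_self]
  · rw [h₁ m n he, h₂ m n he]
  exacts [of_sym2_eq hs hi, of_sym2_eq hs hj, of_sym2_eq hs hk]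

theorem octCongruent_of_degenerate_face (h₁ : Compatible lam ρ₁) (h₂ : Compatible lam ρ₂)
    (hpos : ∀ i j, IsOctEdge i j → 0 < lam s(i, j)) {i j k : ℕ} (hface : IsOctFace i j k)
    (hdeg : lam s(i, k) = lam s(i, j) + lam s(j, k)) :
    OctCongruent ρ₁ ρ₂ := by
  obtain ⟨σ, hσ⟩ := exists_affineIsometryEquiv_eq_of_dist_eq ρ₁ ρ₂ octV
    (h₁.dist_eq_of_degenerate_face h₂ hpos hface hdeg)
  exact ⟨σ.toIsometryEquiv, hσ⟩

end Compatible

/-- A labeling of the octahedral graph with a degenerate face is not flexible: any set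
of pairwise non-congruent compatible realizations is finite. -/
theorem degenerate_face_not_flexible
    (lam : Sym2 ℕ → ℝ)
    (hpos : ∀ i j, IsOctEdge i j → 0 < lam s(i, j))
    (hdeg : ∃ i j k, IsOctFace i j k ∧ lam s(i, k) = lam s(i, j) + lam s(j, k)) :
    ∀ S : Set (ℕ → Pt), (∀ ρ ∈ S, Compatible lam ρ) →
      (∀ ρ₁ ∈ S, ∀ ρ₂ ∈ S, ρ₁ ≠ ρ₂ → ¬ OctCongruent ρ₁ ρ₂) →
      S.Finite := by
  intro S hS hnoncongr
  obtain ⟨i, j, k, hface, hdeg⟩ := hdeg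
  refine Set.Subsingleton.finite fun ρ₁ h₁ ρ₂ h₂ => ?_
  by_contra hne
  exact hnoncongr ρ₁ h₁ ρ₂ h₂ hne
    ((hS ρ₁ h₁).octCongruent_of_degenerate_face (hS ρ₂ h₂) hpos hface hdeg)
end
end
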